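/- The gradient-descent compositor preserves updates: with f, g, h, p, q, x, z as above and learning rate ε > 0, the updated parameter of the composite state, (q,p) + ε π_{M+L}(Dh_{(q,p,x)})ᵀ z, equals the pair (q + ε π_M (Dg_{(q,f(p,x))})ᵀ z, p + ε π_L (Df_{(p,x)})ᵀ π_m (Dg_{(q,f(p,x))})ᵀ z) obtained by updating the two states separately in the composed coalgebra. -/

import Mathlib

/-- Concatenation of coordinate blocks: ℝ^a × ℝ^b → ℝ^(a+b). -/
def append {a b : ℕ} (u : Fin a → ℝ) (v : Fin b → ℝ) : Fin (a + b) → ℝ :=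
  fun i => Sum.elim u v (finSumFinEquiv.symm i)

/-- The Jacobian matrix of f at x: entries are the directional derivatives of the
coordinate functions along the standard basis vectors. -/
noncomputable def jac {a b : ℕ} (f : (Fin a → ℝ) → Fin b → ℝ) (x : Fin a → ℝ) :
    Matrix (Fin b) (Fin a) ℝ :=
  fun i j => fderiv ℝ f x (Pi.single j 1) i

/-!
By the chain rule the composite `h (w, v, u) = g (w, f (v, u))` has derivative
`Dh (w', v', u') = Dg (w', Df (v', u'))`. A transposed Jacobian is characterised by
`⟪Jᵀ z, v⟫ = ⟪z, D v⟫`, so pairing the `(M + L)`-block of `Dhᵀ z` with a test vector `(a, b, 0)`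
gives `⟪Dgᵀ z, (a, Df (b, 0))⟫ = ⟪π_M Dgᵀ z, a⟫ + ⟪π_L Dfᵀ π_m Dgᵀ z, b⟫`: the composite gradient
step is the pair of separate ones.
-/

open ContinuousLinearMap Matrix

section Blocks

variable {a b : ℕ}

noncomputable def leftBlock (a b : ℕ) : (Fin (a + b) → ℝ) →L[ℝ] Fin a → ℝ :=
  pi fun i => proj (Fin.castAdd b i)

noncomputable def rightBlock (a b : ℕ) : (Fin (a + b) → ℝ) →L[ℝ] Fin b → ℝ :=
  pi fun i => proj (Fin.natAdd a i)

noncomputable def appendCLM (a b : ℕ) : ((Fin a → ℝ) × (Fin b → ℝ)) →L[ℝ] Fin (a + b) → ℝ :=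
  LinearMap.toContinuousLinearMap
    ((LinearEquiv.sumArrowLequivProdArrow (Fin a) (Fin b) ℝ ℝ).symm.trans
      (LinearEquiv.funCongrLeft ℝ ℝ finSumFinEquiv.symm)).toLinearMap

@[simp] lemma leftBlock_apply (w : Fin (a + b) → ℝ) (i : Fin a) :
    leftBlock a b w i = w (Fin.castAdd b i) := rfl

@[simp] lemma rightBlock_apply (w : Fin (a + b) → ℝ) (i : Fin b) :
    rightBlock a b w i = w (Fin.natAdd a i) := rfl

@[simp] lemma appendCLM_apply (u : Fin a → ℝ) (v : Fin b → ℝ) :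
    appendCLM a b (u, v) = append u v := rfl

@[simp] lemma append_castAdd (u : Fin a → ℝ) (v : Fin b → ℝ) (i : Fin a) :
    append u v (Fin.castAdd b i) = u i := by
  simp [append]

@[simp] lemma append_natAdd (u : Fin a → ℝ) (v : Fin b → ℝ) (i : Fin b) :
    append u v (Fin.natAdd a i) = v i := by
  simp [append]

@[simp] lemma leftBlock_append (u : Fin a → ℝ) (v : Fin b → ℝ) :
    leftBlock a b (append u v) = u := by
  ext; simp

@[simp] lemma rightBlock_append (u : Fin a → ℝ) (v : Fin b → ℝ) :
    rightBlock a b (append u v) = v := by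
  ext; simp

lemma dotProduct_eq_leftBlock_add_rightBlock (v w : Fin (a + b) → ℝ) :
    v ⬝ᵥ w = leftBlock a b v ⬝ᵥ leftBlock a b w + rightBlock a b v ⬝ᵥ rightBlock a b w := by
  simp [dotProduct, Fin.sum_univ_add]

lemma dotProduct_append_zero (w : Fin (a + b) → ℝ) (u : Fin a → ℝ) :
    w ⬝ᵥ append u 0 = leftBlock a b w ⬝ᵥ u := by
  simp [dotProduct_eq_leftBlock_add_rightBlock w]

lemma HasFDerivAt.append {E : Type*} [NormedAddCommGroup E] [NormedSpace ℝ E]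
    {u : E → Fin a → ℝ} {v : E → Fin b → ℝ} {u' : E →L[ℝ] Fin a → ℝ} {v' : E →L[ℝ] Fin b → ℝ}
    {x : E} (hu : HasFDerivAt u u' x) (hv : HasFDerivAt v v' x) :
    HasFDerivAt (fun y => append (u y) (v y)) ((appendCLM a b).comp (u'.prod v')) x :=
  (appendCLM a b).hasFDerivAt.comp x (hu.prodMk hv)

end Blocks

lemma jac_eq_toMatrix' {a b : ℕ} (F : (Fin a → ℝ) → Fin b → ℝ) (x : Fin a → ℝ) :
    jac F x = LinearMap.toMatrix' (fderiv ℝ F x : (Fin a → ℝ) →ₗ[ℝ] Fin b → ℝ) := by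
  ext; rfl

lemma jac_transpose_mulVec_dotProduct {a b : ℕ} (F : (Fin a → ℝ) → Fin b → ℝ)
    (x : Fin a → ℝ) (z : Fin b → ℝ) (v : Fin a → ℝ) :
    (jac F x)ᵀ *ᵥ z ⬝ᵥ v = z ⬝ᵥ fderiv ℝ F x v := by
  rw [mulVec_transpose, ← dotProduct_mulVec, jac_eq_toMatrix', LinearMap.toMatrix'_mulVec]
  rfl

section ParaComp

variable {L l M m n : ℕ}

-- The paper's `h (w, v, u) = g (w, f (v, u))`.
noncomputable def paraComp (g : (Fin (M + m) → ℝ) → Fin n → ℝ) (f : (Fin (L + l) → ℝ) → Fin m → ℝ)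
    (w : Fin (M + L + l) → ℝ) : Fin n → ℝ :=
  g (append (leftBlock M L (leftBlock (M + L) l w))
    (f (append (rightBlock M L (leftBlock (M + L) l w)) (rightBlock (M + L) l w))))

variable {g : (Fin (M + m) → ℝ) → Fin n → ℝ} {f : (Fin (L + l) → ℝ) → Fin m → ℝ}
  {q : Fin M → ℝ} {p : Fin L → ℝ} {x : Fin l → ℝ}

theorem fderiv_paraComp (hf : DifferentiableAt ℝ f (append p x))
    (hg : DifferentiableAt ℝ g (append q (f (append p x)))) :
    ⇑(fderiv ℝ (paraComp g f) (append (append q p) x)) =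
      paraComp (fderiv ℝ g (append q (f (append p x)))) (fderiv ℝ f (append p x)) := by
  set w := append (append q p) x
  have hinner := ((rightBlock M L).comp (leftBlock (M + L) l)).hasFDerivAt (x := w)
    |>.append (rightBlock (M + L) l).hasFDerivAt
  have hf' : HasFDerivAt f (fderiv ℝ f (append p x))
      (append (rightBlock M L (leftBlock (M + L) l w)) (rightBlock (M + L) l w)) := by
    simpa [w] using hf.hasFDerivAt
  have hg' : HasFDerivAt g (fderiv ℝ g (append q (f (append p x))))
      (append (leftBlock M L (leftBlock (M + L) l w))
        (f (append (rightBlock M L (leftBlock (M + L) l w)) (rightBlock (M + L) l w)))) := by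
    simpa [w] using hg.hasFDerivAt
  have hpara : HasFDerivAt (paraComp g f) _ w := hg'.comp w
    (((leftBlock M L).comp (leftBlock (M + L) l)).hasFDerivAt.append (hf'.comp w hinner))
  rw [hpara.fderiv]
  ext v
  simp [paraComp]

theorem leftBlock_jac_paraComp_transpose_mulVec (hf : DifferentiableAt ℝ f (append p x))
    (hg : DifferentiableAt ℝ g (append q (f (append p x)))) (z : Fin n → ℝ) :
    leftBlock (M + L) l ((jac (paraComp g f) (append (append q p) x))ᵀ *ᵥ z) =
      append (leftBlock M m ((jac g (append q (f (append p x))))ᵀ *ᵥ z))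
        (leftBlock L l ((jac f (append p x))ᵀ *ᵥ
          rightBlock M m ((jac g (append q (f (append p x))))ᵀ *ᵥ z))) := by
  set G := (jac g (append q (f (append p x))))ᵀ *ᵥ z
  set F := (jac f (append p x))ᵀ *ᵥ rightBlock M m G
  set Dg := fderiv ℝ g (append q (f (append p x)))
  set Df := fderiv ℝ f (append p x)
  refine dotProduct_eq _ _ fun u => ?_
  calc _ = (jac (paraComp g f) (append (append q p) x))ᵀ *ᵥ z ⬝ᵥ append u 0 :=
        (dotProduct_append_zero _ u).symm
    _ = z ⬝ᵥ Dg (append (leftBlock M L u) (Df (append (rightBlock M L u) 0))) := by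
        rw [jac_transpose_mulVec_dotProduct, fderiv_paraComp hf hg]
        simp [paraComp, Dg, Df]
    _ = G ⬝ᵥ append (leftBlock M L u) (Df (append (rightBlock M L u) 0)) :=
        (jac_transpose_mulVec_dotProduct _ _ _ _).symm
    _ = leftBlock M m G ⬝ᵥ leftBlock M L u + F ⬝ᵥ append (rightBlock M L u) 0 := by
        rw [dotProduct_eq_leftBlock_add_rightBlock G, jac_transpose_mulVec_dotProduct]
        simp [Df]
    _ = _ := by
        rw [dotProduct_append_zero, dotProduct_eq_leftBlock_add_rightBlock _ u]
        simp

end ParaComp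

theorem stmt_18_general (L l M m n : ℕ)
    (f : (Fin (L + l) → ℝ) → Fin m → ℝ) (g : (Fin (M + m) → ℝ) → Fin n → ℝ)
    (hf : Differentiable ℝ f) (hg : Differentiable ℝ g)
    (p : Fin L → ℝ) (q : Fin M → ℝ) (x : Fin l → ℝ) (z : Fin n → ℝ)
    (ε : ℝ) :
    let h : (Fin ((M + L) + l) → ℝ) → Fin n → ℝ := fun w =>
      g (append (fun i => w (Fin.castAdd l (Fin.castAdd L i)))
          (f (append (fun i => w (Fin.castAdd l (Fin.natAdd M i)))
              (fun i => w (Fin.natAdd (M + L) i)))))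
    (fun i : Fin (M + L) =>
        append q p i +
          ε * ((jac h (append (append q p) x)).transpose.mulVec z) (Fin.castAdd l i)) =
      append
        (fun i : Fin M =>
          q i + ε * ((jac g (append q (f (append p x)))).transpose.mulVec z) (Fin.castAdd m i))
        (fun i : Fin L =>
          p i + ε * ((jac f (append p x)).transpose.mulVec
            (fun i' : Fin m =>
              ((jac g (append q (f (append p x)))).transpose.mulVec z) (Fin.natAdd M i')))
            (Fin.castAdd l i)) := by
  intro h
  have hupdate := congrFun (leftBlock_jac_paraComp_transpose_mulVec (hf (append p x))
    (hg (append q (f (append p x)))) z)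
  rw [show h = paraComp g f from rfl]
  ext i
  induction i using Fin.addCases with
  | left i =>
    have hq := hupdate (Fin.castAdd L i)
    simp only [leftBlock_apply, append_castAdd] at hq ⊢
    rw [hq]
  | right i =>
    have hp := hupdate (Fin.natAdd M i)
    simp only [leftBlock_apply, append_natAdd] at hp ⊢
    rw [hp]
    rfl

/-- The gradient-descent compositor preserves updates: the updated parameter of the
composite state, (q,p) + ε·π_{M+L}(Dh).transposez, equals the pair of separate updates
(q + ε·π_M(Dg).transposez, p + ε·π_L(Df).transposeπ_m(Dg).transposez). -/
theorem stmt_18 (L l M m n : ℕ)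
    (f : (Fin (L + l) → ℝ) → Fin m → ℝ) (g : (Fin (M + m) → ℝ) → Fin n → ℝ)
    (hf : Differentiable ℝ f) (hg : Differentiable ℝ g)
    (p : Fin L → ℝ) (q : Fin M → ℝ) (x : Fin l → ℝ) (z : Fin n → ℝ)
    (ε : ℝ) (hε : 0 < ε) :
    let h : (Fin ((M + L) + l) → ℝ) → Fin n → ℝ := fun w =>
      g (append (fun i => w (Fin.castAdd l (Fin.castAdd L i)))
          (f (append (fun i => w (Fin.castAdd l (Fin.natAdd M i)))
              (fun i => w (Fin.natAdd (M + L) i)))))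
    (fun i : Fin (M + L) =>
        append q p i +
          ε * ((jac h (append (append q p) x)).transpose.mulVec z) (Fin.castAdd l i)) =
      append
        (fun i : Fin M =>
          q i + ε * ((jac g (append q (f (append p x)))).transpose.mulVec z) (Fin.castAdd m i))
        (fun i : Fin L =>
          p i + ε * ((jac f (append p x)).transpose.mulVec
            (fun i' : Fin m =>
              ((jac g (append q (f (append p x)))).transpose.mulVec z) (Fin.natAdd M i')))
            (Fin.castAdd l i)) :=
  stmt_18_general L l M m n f g hf hg p q x z ε
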